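/- arXiv:1506.06822 — 2 statements merged into one kernel-verified Lean document; each statement's English description precedes it below -/
import Mathlib

section
/- Let ρ > 0, N ≥ 1, and ε, θ with 0 < ε < 1/2. Define L(N) = (Nρ(ε² + θ²/4) / (2(1+ε²))) · ((Nρ(1+2ε)/(1+Nρ(1+2ε)))² + (Nρ(1−2ε)/(1+Nρ(1−2ε)))²). Then L(N) is strictly increasing in N and L(N) → ∞ as N → ∞ (provided ε² + θ²/4 > 0). -/
/-!
Writing `c = ρ (ε² + θ²/4) / (2 (1 + ε²))` and `a, b = ρ (1 ± 2ε)`, all positive as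
`0 < ε < 1/2`, the loss is `L N = c (g_a N + g_b N)` with `g_a N = N (a N / (1 + a N))²`.
Each `g_a` is the product of the strictly increasing factor `N` and the increasing, positive
factor `(a N / (1 + a N))²`, and for `N ≥ 1` it dominates `N (a / (1 + a))²`.
-/

open Filter Set

lemma monotoneOn_div_one_add : MonotoneOn (fun t : ℝ => t / (1 + t)) (Ici 0) := by
  intro s hs t ht hst
  simp only [mem_Ici] at hs ht
  rw [div_le_div_iff₀ (by linarith) (by linarith)]
  nlinarith

section SaturatingGain

variable {a : ℝ}

lemma sq_mul_div_one_add_mul_le_of_le (ha : 0 < a) {x y : ℝ} (hx : 0 ≤ x) (hxy : x ≤ y) :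
    (a * x / (1 + a * x)) ^ 2 ≤ (a * y / (1 + a * y)) ^ 2 :=
  have hax : 0 ≤ a * x := mul_nonneg ha.le hx
  pow_le_pow_left₀ (div_nonneg hax (by linarith))
    (monotoneOn_div_one_add hax (hax.trans (by gcongr)) (by gcongr)) 2

lemma strictMonoOn_mul_sq_div_one_add (ha : 0 < a) :
    StrictMonoOn (fun x : ℝ => x * (a * x / (1 + a * x)) ^ 2) (Ioi 0) := by
  intro x hx y hy hxy
  simp only [mem_Ioi] at hx hy
  calc x * (a * x / (1 + a * x)) ^ 2
      < y * (a * x / (1 + a * x)) ^ 2 := by gcongr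
    _ ≤ y * (a * y / (1 + a * y)) ^ 2 :=
      mul_le_mul_of_nonneg_left (sq_mul_div_one_add_mul_le_of_le ha hx.le hxy.le) hy.le

lemma tendsto_mul_sq_div_one_add_atTop (ha : 0 < a) :
    Tendsto (fun x : ℝ => x * (a * x / (1 + a * x)) ^ 2) atTop atTop := by
  have hlin : Tendsto (fun x : ℝ => (a / (1 + a)) ^ 2 * x) atTop atTop :=
    tendsto_id.const_mul_atTop (by positivity)
  refine tendsto_atTop_mono' atTop ?_ hlin
  filter_upwards [eventually_ge_atTop 1] with x hx
  have h := sq_mul_div_one_add_mul_le_of_le ha zero_le_one hx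
  rw [mul_one] at h
  nlinarith [sq_nonneg (a / (1 + a))]

end SaturatingGain

theorem iqu_loss_vs_iqa_ut_general (ρ ε θ : ℝ) (hρ : 0 < ρ)
    (hε₀ : 0 < ε) (hε : ε < 1 / 2)
    (L : ℝ → ℝ)
    (hL : ∀ N : ℝ, L N =
      (N * ρ * (ε ^ 2 + θ ^ 2 / 4) / (2 * (1 + ε ^ 2)))
        * ((N * ρ * (1 + 2 * ε) / (1 + N * ρ * (1 + 2 * ε))) ^ 2
          + (N * ρ * (1 - 2 * ε) / (1 + N * ρ * (1 - 2 * ε))) ^ 2)) :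
    StrictMonoOn L (Set.Ici (1 : ℝ)) ∧
    Filter.Tendsto L Filter.atTop Filter.atTop := by
  set a := ρ * (1 + 2 * ε)
  set b := ρ * (1 - 2 * ε)
  set c := ρ * (ε ^ 2 + θ ^ 2 / 4) / (2 * (1 + ε ^ 2))
  have ha : 0 < a := mul_pos hρ (by linarith)
  have hb : 0 < b := mul_pos hρ (by linarith)
  have hc : 0 < c := by positivity
  have hL' : L = fun N => c * (N * (a * N / (1 + a * N)) ^ 2 + N * (b * N / (1 + b * N)) ^ 2) := by
    funext N
    rw [hL N]
    ring
  rw [hL']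
  refine ⟨?_, ?_⟩
  · refine (strictMono_mul_left_of_pos hc).comp_strictMonoOn ?_
    refine ((strictMonoOn_mul_sq_div_one_add ha).add (strictMonoOn_mul_sq_div_one_add hb)).mono ?_
    exact Ici_subset_Ioi.mpr zero_lt_one
  · exact ((tendsto_mul_sq_div_one_add_atTop ha).atTop_add_atTop
      (tendsto_mul_sq_div_one_add_atTop hb)).const_mul_atTop hc

theorem iqu_loss_vs_iqa_ut (ρ ε θ : ℝ) (hρ : 0 < ρ)
    (hε₀ : 0 < ε) (hε : ε < 1 / 2)
    (hpos : 0 < ε ^ 2 + θ ^ 2 / 4)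
    (L : ℝ → ℝ)
    (hL : ∀ N : ℝ, L N =
      (N * ρ * (ε ^ 2 + θ ^ 2 / 4) / (2 * (1 + ε ^ 2)))
        * ((N * ρ * (1 + 2 * ε) / (1 + N * ρ * (1 + 2 * ε))) ^ 2
          + (N * ρ * (1 - 2 * ε) / (1 + N * ρ * (1 - 2 * ε))) ^ 2)) :
    StrictMonoOn L (Set.Ici (1 : ℝ)) ∧
    Filter.Tendsto L Filter.atTop Filter.atTop :=
  iqu_loss_vs_iqa_ut_general ρ ε θ hρ hε₀ hε L hL
end

section
/- Let A be an N×N complex Hermitian matrix, B an N×N Hermitian positive semidefinite matrix, q ∈ ℂᴺ, and α, α' > 0. Then |tr(A(B + αI)⁻¹ − A(B + α'qqᴴ + αI)⁻¹)| ≤ ‖A‖/α, where ‖A‖ denotes the spectral (operator) norm of A. -/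
/-!
Write `C = B + αI` and `v = C⁻¹q`. The resolvent identity and the Sherman–Morrison formula
give `tr(A C⁻¹ - A (C + α' q qᴴ)⁻¹) = α' / (1 + α' qᴴC⁻¹q) · vᴴAv`. Now `|vᴴAv| ≤ ‖A‖ ‖v‖²`,
while `qᴴC⁻¹q = vᴴCv ≥ α ‖v‖²` because `B ≥ 0`; hence `α' ‖v‖² / (1 + α' qᴴC⁻¹q) ≤ 1/α`.
-/

open Matrix
open scoped ComplexOrder

namespace Matrix

variable {n : Type*} [Fintype n] [DecidableEq n]

section Field

variable {K : Type*} [Field K]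

theorem inv_add_vecMulVec_mulVec {C : Matrix n n K} {u v w : n → K}
    (hC' : IsUnit (C + vecMulVec u w)) (hv : C *ᵥ v = u) :
    (C + vecMulVec u w)⁻¹ *ᵥ u = (1 + w ⬝ᵥ v)⁻¹ • v := by
  have hC'v : (C + vecMulVec u w) *ᵥ v = (1 + w ⬝ᵥ v) • u := by
    rw [add_mulVec, hv, vecMulVec_mulVec, op_smul_eq_smul, add_smul, one_smul]
  have hinv : (C + vecMulVec u w)⁻¹ *ᵥ ((C + vecMulVec u w) *ᵥ v) = v := by
    rw [mulVec_mulVec, nonsing_inv_mul _ ((isUnit_iff_isUnit_det _).mp hC'), one_mulVec]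
  by_cases h : 1 + w ⬝ᵥ v = 0
  · have hv0 : v = 0 := by
      rw [hC'v, h, zero_smul, mulVec_zero] at hinv
      exact hinv.symm
    simp [← hv, hv0]
  · rw [hC'v, mulVec_smul] at hinv
    rwa [eq_inv_smul_iff₀ h]

theorem trace_mul_inv_sub_mul_inv_add_vecMulVec (A : Matrix n n K) {C : Matrix n n K}
    (u w : n → K) (hC : IsUnit C) (hC' : IsUnit (C + vecMulVec u w)) :
    trace (A * C⁻¹ - A * (C + vecMulVec u w)⁻¹) =
      (1 + w ⬝ᵥ (C⁻¹ *ᵥ u))⁻¹ * ((w ᵥ* C⁻¹) ⬝ᵥ (A *ᵥ (C⁻¹ *ᵥ u))) := by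
  have hresolvent :
      C⁻¹ - (C + vecMulVec u w)⁻¹ = (C + vecMulVec u w)⁻¹ * vecMulVec u w * C⁻¹ := by
    rw [← neg_sub, inv_sub_inv (iff_of_true hC' hC), sub_add_cancel_left, Matrix.mul_neg,
      Matrix.neg_mul, neg_neg]
  have hv : C *ᵥ (C⁻¹ *ᵥ u) = u := by
    rw [mulVec_mulVec, mul_nonsing_inv _ ((isUnit_iff_isUnit_det _).mp hC), one_mulVec]
  rw [← Matrix.mul_sub, hresolvent, ← Matrix.mul_assoc, ← Matrix.mul_assoc, trace_mul_comm,
    ← Matrix.mul_assoc, mul_vecMulVec, trace_vecMulVec]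
  rw [← mulVec_mulVec, ← mulVec_mulVec, inv_add_vecMulVec_mulVec hC' hv, mulVec_smul,
    mulVec_smul, smul_dotProduct, smul_eq_mul, dotProduct_comm _ w,
    dotProduct_mulVec w C⁻¹ (A *ᵥ _)]

end Field

section RCLike

variable {𝕜 : Type*} [RCLike 𝕜]

theorem norm_star_dotProduct_mulVec_le (A : Matrix n n 𝕜) (v : n → 𝕜) :
    ‖star v ⬝ᵥ (A *ᵥ v)‖ ≤ ‖toEuclideanCLM (𝕜 := 𝕜) A‖ * ‖WithLp.toLp 2 v‖ ^ 2 := by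
  set x := WithLp.toLp 2 v
  have hinner : star v ⬝ᵥ (A *ᵥ v) = inner 𝕜 x (toEuclideanCLM (𝕜 := 𝕜) A x) :=
    dotProduct_comm _ _
  rw [hinner]
  calc ‖inner 𝕜 x (toEuclideanCLM (𝕜 := 𝕜) A x)‖
      ≤ ‖x‖ * ‖toEuclideanCLM (𝕜 := 𝕜) A x‖ := norm_inner_le_norm _ _
    _ ≤ ‖x‖ * (‖toEuclideanCLM (𝕜 := 𝕜) A‖ * ‖x‖) := by
        gcongr
        exact ContinuousLinearMap.le_opNorm _ _
    _ = ‖toEuclideanCLM (𝕜 := 𝕜) A‖ * ‖x‖ ^ 2 := by ring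

theorem PosSemidef.mul_norm_sq_le_re_dotProduct_add_smul_one {B : Matrix n n 𝕜}
    (hB : B.PosSemidef) (a : ℝ) (v : n → 𝕜) :
    a * ‖WithLp.toLp 2 v‖ ^ 2 ≤ RCLike.re (star v ⬝ᵥ ((B + (a : 𝕜) • 1) *ᵥ v)) := by
  have hnorm : star v ⬝ᵥ v = ((‖WithLp.toLp 2 v‖ ^ 2 : ℝ) : 𝕜) := by
    rw [RCLike.ofReal_pow, ← inner_self_eq_norm_sq_to_K]
    exact dotProduct_comm _ _
  have hB_re : 0 ≤ RCLike.re (star v ⬝ᵥ (B *ᵥ v)) :=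
    RCLike.nonneg_iff.mp (hB.dotProduct_mulVec_nonneg v) |>.1
  rw [add_mulVec, smul_mulVec, one_mulVec, dotProduct_add, dotProduct_smul, hnorm, smul_eq_mul,
    map_add, ← RCLike.ofReal_mul, RCLike.ofReal_re]
  linarith

theorem PosDef.trace_mul_inv_sub_mul_inv_add_smul_vecMulVec (A : Matrix n n 𝕜)
    {C : Matrix n n 𝕜} (hC : C.PosDef) (q : n → 𝕜) {a : ℝ} (ha : 0 ≤ a) :
    trace (A * C⁻¹ - A * (C + (a : 𝕜) • vecMulVec q (star q))⁻¹) =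
      ((a / (1 + a * RCLike.re (star q ⬝ᵥ (C⁻¹ *ᵥ q))) : ℝ) : 𝕜) *
        (star (C⁻¹ *ᵥ q) ⬝ᵥ (A *ᵥ (C⁻¹ *ᵥ q))) := by
  have hC' : (C + vecMulVec q ((a : 𝕜) • star q)).PosDef := by
    rw [vecMulVec_smul]
    exact hC.add_posSemidef
      ((posSemidef_vecMulVec_self_star q).smul (RCLike.ofReal_nonneg.mpr ha))
  have hreal : (RCLike.re (star q ⬝ᵥ (C⁻¹ *ᵥ q)) : 𝕜) = star q ⬝ᵥ (C⁻¹ *ᵥ q) :=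
    RCLike.conj_eq_iff_re.mp (hC.inv.posSemidef.dotProduct_mulVec_nonneg q).isSelfAdjoint.star_eq
  rw [← vecMulVec_smul, trace_mul_inv_sub_mul_inv_add_vecMulVec A q _ hC.isUnit hC'.isUnit,
    smul_vecMul, star_mulVec, hC.inv.isHermitian.eq, smul_dotProduct, smul_dotProduct, ← hreal]
  push_cast
  simp only [smul_eq_mul]
  ring

end RCLike

end Matrix

theorem rank_one_perturbation_general {N : ℕ}
    (A B : Matrix (Fin N) (Fin N) ℂ)
    (hB : B.PosSemidef)
    (q : Fin N → ℂ) (α α' : ℝ) (hα : 0 < α) (hα' : 0 < α') :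
    norm
      (Matrix.trace (A * (B + (α : ℂ) • (1 : Matrix (Fin N) (Fin N) ℂ))⁻¹
        - A * (B + (α' : ℂ) • Matrix.vecMulVec q (star q)
            + (α : ℂ) • (1 : Matrix (Fin N) (Fin N) ℂ))⁻¹))
      ≤ ‖Matrix.toEuclideanCLM (𝕜 := ℂ) A‖ / α := by
  set C := B + (α : ℂ) • (1 : Matrix (Fin N) (Fin N) ℂ) with hC_def
  have hC : C.PosDef := .posSemidef_add hB (.smul .one (RCLike.ofReal_pos.mpr hα))
  have htrace := hC.trace_mul_inv_sub_mul_inv_add_smul_vecMulVec A q hα'.le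
  rw [RCLike.ofReal_eq_complex_ofReal] at htrace
  rw [add_right_comm, ← hC_def, htrace]
  set v := C⁻¹ *ᵥ q
  set s := RCLike.re (star q ⬝ᵥ v)
  set T := ‖toEuclideanCLM (𝕜 := ℂ) A‖
  have hs : 0 ≤ s := (RCLike.nonneg_iff.mp (hC.inv.posSemidef.dotProduct_mulVec_nonneg q)).1
  have hsv : α * ‖WithLp.toLp 2 v‖ ^ 2 ≤ s := by
    have hCv : C *ᵥ v = q := by
      rw [mulVec_mulVec, mul_nonsing_inv _ ((isUnit_iff_isUnit_det _).mp hC.isUnit), one_mulVec]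
    have h : α * ‖WithLp.toLp 2 v‖ ^ 2 ≤ RCLike.re (star v ⬝ᵥ (C *ᵥ v)) :=
      hB.mul_norm_sq_le_re_dotProduct_add_smul_one α v
    rwa [hCv, star_dotProduct, RCLike.star_def, RCLike.conj_re] at h
  calc ‖((α' / (1 + α' * s) : ℝ) : ℂ) * (star v ⬝ᵥ (A *ᵥ v))‖
      = α' / (1 + α' * s) * ‖star v ⬝ᵥ (A *ᵥ v)‖ := by
        rw [norm_mul, Complex.norm_real, Real.norm_of_nonneg (by positivity)]
    _ ≤ α' / (1 + α' * s) * (T * ‖WithLp.toLp 2 v‖ ^ 2) := by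
        gcongr
        exact norm_star_dotProduct_mulVec_le A v
    _ ≤ T / α := by
        rw [div_mul_eq_mul_div, div_le_div_iff₀ (by positivity) hα]
        have hT : 0 ≤ T := norm_nonneg _
        nlinarith [mul_le_mul_of_nonneg_left hsv (mul_nonneg hT hα'.le)]

/-- Rank-1 perturbation lemma. -/
theorem rank_one_perturbation {N : ℕ}
    (A B : Matrix (Fin N) (Fin N) ℂ)
    (hA : A.IsHermitian) (hB : B.PosSemidef)
    (q : Fin N → ℂ) (α α' : ℝ) (hα : 0 < α) (hα' : 0 < α') :
    norm
      (Matrix.trace (A * (B + (α : ℂ) • (1 : Matrix (Fin N) (Fin N) ℂ))⁻¹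
        - A * (B + (α' : ℂ) • Matrix.vecMulVec q (star q)
            + (α : ℂ) • (1 : Matrix (Fin N) (Fin N) ℂ))⁻¹))
      ≤ ‖Matrix.toEuclideanCLM (𝕜 := ℂ) A‖ / α :=
  rank_one_perturbation_general A B hB q α α' hα hα'
end
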